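/- Let I = (f_0,...,f_k) ⊆ R = k[x_1,...,x_N] be an ideal generated by homogeneous polynomials all of degree r, and let 𝓡(I) = ⊕_{d≥0} I^d t^d be its Rees algebra, bigraded with deg(x_i) = (1,0) and elements of I^d t^d in w-degree d. Then for all i, j, d, the graded Betti number of I^d as an R-module satisfies β_{i, j+rd}(I^d) = dim_k Tor_i^S(S/M, 𝓡(I))_{(j,d)}, where S = k[x_1,...,x_N, w_0,...,w_k] presents 𝓡(I) and M = (x_1,...,x_N). -/

import Mathlib

open MvPolynomial

noncomputable section

namespace KoszulModel

variable (𝕜 : Type) [Field 𝕜] (σ : Type) [Fintype σ] [LinearOrder σ]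
  {ι : Type} [AddCommGroup ι]
  (V : ι → Type) [∀ a, AddCommGroup (V a)] [∀ a, Module 𝕜 (V a)]
  (δ : σ → ι)
  (Op : (s : σ) → (a : ι) → V a →ₗ[𝕜] V (a + δ s))

/-- transport along equality of degrees -/
def vcast {a b : ι} (h : a = b) : V a ≃ₗ[𝕜] V b := h ▸ LinearEquiv.refl 𝕜 (V a)

/-- The degree-`j` strand of the `i`-th term of the Koszul complex. -/
abbrev KSpace (i : ℕ) (j : ι) : Type :=
  ∀ S : {t : Finset σ // t.card = i}, V (j - ∑ s ∈ S.1, δ s)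

/-- Koszul differential. -/
def kd (i : ℕ) (j : ι) : KSpace σ V δ (i + 1) j →ₗ[𝕜] KSpace σ V δ i j where
  toFun f t := ∑ s : σ,
    if h : s ∈ t.1 then 0 else
      ((-1 : 𝕜) ^ (t.1.filter (· < s)).card) •
        vcast 𝕜 V (by rw [Finset.sum_insert h]; abel)
          (Op s (j - ∑ u ∈ insert s t.1, δ u)
            (f ⟨insert s t.1, by rw [Finset.card_insert_of_notMem h, t.2]⟩))
  map_add' f g := by
    funext t
    rw [Pi.add_apply, ← Finset.sum_add_distrib]
    refine Finset.sum_congr rfl fun s _ => ?_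
    by_cases h : s ∈ t.1
    · simp [h]
    · simp [h, Pi.add_apply, map_add, smul_add]
  map_smul' c f := by
    funext t
    rw [RingHom.id_apply, Pi.smul_apply, Finset.smul_sum]
    refine Finset.sum_congr rfl fun s _ => ?_
    by_cases h : s ∈ t.1
    · simp [h]
    · simp only [h, dite_false, Pi.smul_apply, map_smul]
      rw [smul_comm]

def kdOut : (i : ℕ) → (j : ι) → KSpace σ V δ i j →ₗ[𝕜] KSpace σ V δ (i - 1) j
  | 0, _ => 0
  | (i + 1), j => kd 𝕜 σ V δ Op i j

/-- The degree-`j` strand of the `i`-th Koszul homology: a model for `Tor_i`. -/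
abbrev torSpace (i : ℕ) (j : ι) : Type :=
  ↥(LinearMap.ker (kdOut 𝕜 σ V δ Op i j)) ⧸
    (LinearMap.range (kd 𝕜 σ V δ Op i j)).comap
      (LinearMap.ker (kdOut 𝕜 σ V δ Op i j)).subtype

/-- Graded Betti number: the dimension of the degree-`j` strand of `i`-th Koszul homology. -/
def betti (i : ℕ) (j : ι) : ℕ := Module.finrank 𝕜 (torSpace 𝕜 σ V δ Op i j)

variable (𝕜 : Type) [Field 𝕜] (n : ℕ)

/-- The degree-`(a + off)` homogeneous piece of an ideal `I`, as a `𝕜`-subspace. -/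
def idealPiece (I : Ideal (MvPolynomial (Fin n) 𝕜)) (off : ℕ) (a : ℤ) :
    Submodule 𝕜 (MvPolynomial (Fin n) 𝕜) :=
  if 0 ≤ a then
    (I.restrictScalars 𝕜) ⊓ (homogeneousSubmodule (Fin n) 𝕜 (a.toNat + off))
  else ⊥

/-- Multiplication by the variable `X s`, as a degree-one map on the pieces of `I`. -/
def idealMulX (I : Ideal (MvPolynomial (Fin n) 𝕜)) (off : ℕ) (s : Fin n) (a : ℤ) :
    ↥(idealPiece 𝕜 n I off a) →ₗ[𝕜] ↥(idealPiece 𝕜 n I off (a + 1)) where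
  toFun p := ⟨X s * p.1, by
    have hp := p.2
    by_cases ha : 0 ≤ a
    · simp only [idealPiece, if_pos ha] at hp
      simp only [idealPiece, if_pos (by omega : (0:ℤ) ≤ a + 1)]
      refine Submodule.mem_inf.2 ⟨?_, ?_⟩
      · exact Ideal.mul_mem_left _ _ (Submodule.mem_inf.1 hp).1
      · have h2 : (p.1 : MvPolynomial (Fin n) 𝕜).IsHomogeneous (a.toNat + off) :=
          (mem_homogeneousSubmodule _ _).1 (Submodule.mem_inf.1 hp).2
        have hx : (X s : MvPolynomial (Fin n) 𝕜).IsHomogeneous 1 := isHomogeneous_X _ _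
        have := hx.mul h2
        rw [mem_homogeneousSubmodule]
        convert this using 1
        omega
    · simp only [idealPiece, if_neg ha] at hp
      have : (p.1 : MvPolynomial (Fin n) 𝕜) = 0 := by simpa using hp
      rw [this, mul_zero]
      exact Submodule.zero_mem _⟩
  map_add' p q := by ext; simp [mul_add]
  map_smul' c p := by ext; simp [Algebra.mul_smul_comm]

/-- The graded Betti numbers `β_{i,j}(I)` of an ideal `I`,
computed as dimensions of the strands of the Koszul homology `Tor_i(𝕜, I)_j`. -/
def idealBetti (I : Ideal (MvPolynomial (Fin n) 𝕜)) (i j : ℕ) : ℕ :=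
  KoszulModel.betti 𝕜 (Fin n) (fun a => ↥(idealPiece 𝕜 n I 0 a)) (fun _ => (1 : ℤ))
    (fun s a => idealMulX 𝕜 n I 0 s a) i (j : ℤ)

/-- The bidegree-`(j, d)` piece of the Rees algebra `𝓡(I) = ⊕_d I^d t^d`:
elements `f t^d` with `f ∈ I^d` homogeneous of internal degree `j + r d`. -/
def reesPiece (I : Ideal (MvPolynomial (Fin n) 𝕜)) (r : ℕ) (jd : ℤ × ℤ) :
    Submodule 𝕜 (MvPolynomial (Fin n) 𝕜) :=
  if 0 ≤ jd.1 ∧ 0 ≤ jd.2 then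
    ((I ^ jd.2.toNat).restrictScalars 𝕜) ⊓
      (homogeneousSubmodule (Fin n) 𝕜 (jd.1.toNat + r * jd.2.toNat))
  else ⊥

/-- Multiplication by `X s` on the Rees algebra, of bidegree `(1,0)`. -/
def reesMulX (I : Ideal (MvPolynomial (Fin n) 𝕜)) (r : ℕ) (s : Fin n) (jd : ℤ × ℤ) :
    ↥(reesPiece 𝕜 n I r jd) →ₗ[𝕜] ↥(reesPiece 𝕜 n I r (jd + (1, 0))) where
  toFun p := ⟨X s * p.1, by
    have hp := p.2
    by_cases h : 0 ≤ jd.1 ∧ 0 ≤ jd.2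
    · simp only [reesPiece, if_pos h] at hp
      have hcond : (0:ℤ) ≤ (jd + (1,0)).1 ∧ (0:ℤ) ≤ (jd + (1,0)).2 := by
        constructor <;> simp <;> omega
      simp only [reesPiece, if_pos hcond]
      have hd : ((jd + (1,0)).2).toNat = jd.2.toNat := by simp
      refine Submodule.mem_inf.2 ⟨?_, ?_⟩
      · rw [Submodule.restrictScalars_mem, hd]
        exact Ideal.mul_mem_left _ _ (Submodule.mem_inf.1 hp).1
      have h2 := (mem_homogeneousSubmodule _ _).1 (Submodule.mem_inf.1 hp).2
      have hx : (X s : MvPolynomial (Fin n) 𝕜).IsHomogeneous 1 := isHomogeneous_X _ _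
      rw [mem_homogeneousSubmodule]
      have hj : ((jd + (1,0)).1).toNat = jd.1.toNat + 1 := by
        simp only [Prod.fst_add]; omega
      rw [hd, hj]
      convert hx.mul h2 using 1
      ring
    · simp only [reesPiece, if_neg h] at hp
      have : (p.1 : MvPolynomial (Fin n) 𝕜) = 0 := by simpa using hp
      rw [this, mul_zero]; exact Submodule.zero_mem _⟩
  map_add' p q := by ext; simp [mul_add]
  map_smul' c p := by ext; simp [Algebra.mul_smul_comm]

/-- Multiplication by `w_t`, i.e. by `f t ⋅ t`, on the Rees algebra, of bidegree `(0,1)`. -/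
def reesMulF (I : Ideal (MvPolynomial (Fin n) 𝕜)) (r : ℕ)
    (g : MvPolynomial (Fin n) 𝕜) (hgI : g ∈ I) (hgh : g.IsHomogeneous r) (jd : ℤ × ℤ) :
    ↥(reesPiece 𝕜 n I r jd) →ₗ[𝕜] ↥(reesPiece 𝕜 n I r (jd + (0, 1))) where
  toFun p := ⟨g * p.1, by
    have hp := p.2
    by_cases h : 0 ≤ jd.1 ∧ 0 ≤ jd.2
    · simp only [reesPiece, if_pos h] at hp
      have hcond : (0:ℤ) ≤ (jd + (0,1)).1 ∧ (0:ℤ) ≤ (jd + (0,1)).2 := by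
        constructor <;> simp <;> omega
      simp only [reesPiece, if_pos hcond]
      refine Submodule.mem_inf.2 ⟨?_, ?_⟩
      · have hd : ((jd + (0,1)).2).toNat = jd.2.toNat + 1 := by
          simp only [Prod.snd_add]; omega
        rw [Submodule.restrictScalars_mem, hd, pow_succ']
        exact Ideal.mul_mem_mul hgI (Submodule.mem_inf.1 hp).1
      · have h2 := (mem_homogeneousSubmodule _ _).1 (Submodule.mem_inf.1 hp).2
        rw [mem_homogeneousSubmodule]
        have hd : ((jd + (0,1)).2).toNat = jd.2.toNat + 1 := by
          simp only [Prod.snd_add]; omega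
        have hj : ((jd + (0,1)).1).toNat = jd.1.toNat := by simp
        rw [hd, hj]
        convert hgh.mul h2 using 1
        ring
    · simp only [reesPiece, if_neg h] at hp
      have : (p.1 : MvPolynomial (Fin n) 𝕜) = 0 := by simpa using hp
      rw [this, mul_zero]; exact Submodule.zero_mem _⟩
  map_add' p q := by ext; simp [mul_add]
  map_smul' c p := by ext; simp [Algebra.mul_smul_comm]

/-- degree function on `Fin N ⊕ Fin (k+1)`: `x`-variables have bidegree `(1,0)`,
`w`-variables bidegree `(0,1)`. -/
def reesDeg (N k : ℕ) : Fin N ⊕ Fin (k + 1) → ℤ × ℤ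
  | .inl _ => (1, 0)
  | .inr _ => (0, 1)

/-- The action of the variables of `S = 𝕜[x, w]` on the Rees algebra:
`x_s` acts by multiplication, `w_t` acts by multiplication by `f t`. -/
def reesOp (k : ℕ) (I : Ideal (MvPolynomial (Fin n) 𝕜)) (r : ℕ)
    (f : Fin (k + 1) → MvPolynomial (Fin n) 𝕜) (hfI : ∀ t, f t ∈ I)
    (hfh : ∀ t, (f t).IsHomogeneous r) :
    (s : Fin n ⊕ Fin (k + 1)) → (jd : ℤ × ℤ) →
      ↥(reesPiece 𝕜 n I r jd) →ₗ[𝕜] ↥(reesPiece 𝕜 n I r (jd + reesDeg n k s))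
  | .inl s => reesMulX 𝕜 n I r s
  | .inr t => reesMulF 𝕜 n I r (f t) (hfI t) (hfh t)

/-- The bigraded Betti numbers `β_{i,(j,m)}(𝓡(I)) = dim Tor_i^S(𝕜, 𝓡(I))_{(j,m)}` of the
Rees algebra over `S = 𝕜[x_1,…,x_N,w_0,…,w_k]`, via the Koszul complex on all variables. -/
def reesBetti (k : ℕ) (I : Ideal (MvPolynomial (Fin n) 𝕜)) (r : ℕ)
    (f : Fin (k + 1) → MvPolynomial (Fin n) 𝕜) (hfI : ∀ t, f t ∈ I)
    (hfh : ∀ t, (f t).IsHomogeneous r) (i : ℕ) (jm : ℤ × ℤ) : ℕ :=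
  KoszulModel.betti 𝕜 (Fin n ⊕ₗ Fin (k + 1)) (fun jd => ↥(reesPiece 𝕜 n I r jd))
    (fun s => reesDeg n k (ofLex s))
    (fun s => reesOp 𝕜 n k I r f hfI hfh (ofLex s)) i jm

/-- A model for the bigraded module `Tor_i^S(S/M, 𝓡(I))_{(j,d)}`, `M = (x_1,…,x_N)`:
the `(j,d)`-strand of the homology of the Koszul complex on the `x`-variables
(which resolve `S/M` over `S`) with coefficients in the Rees algebra. -/
abbrev reesTorSM (I : Ideal (MvPolynomial (Fin n) 𝕜)) (r : ℕ) (i : ℕ) (jd : ℤ × ℤ) : Type :=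
  KoszulModel.torSpace 𝕜 (Fin n) (fun jd => ↥(reesPiece 𝕜 n I r jd))
    (fun _ => ((1 : ℤ), (0 : ℤ))) (fun s => reesMulX 𝕜 n I r s) i jd

/-- `dim_𝕜 Tor_i^S(S/M, 𝓡(I))_{(j,d)}`. -/
def reesTorSMDim (I : Ideal (MvPolynomial (Fin n) 𝕜)) (r : ℕ) (i : ℕ) (jd : ℤ × ℤ) : ℕ :=
  Module.finrank 𝕜 (reesTorSM 𝕜 n I r i jd)

/-- A model for `Tor_i^R(𝕜, I)_j` for an ideal `I ⊆ R`: Koszul homology. -/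
abbrev idealTor (I : Ideal (MvPolynomial (Fin n) 𝕜)) (i : ℕ) (j : ℤ) : Type :=
  KoszulModel.torSpace 𝕜 (Fin n) (fun a => ↥(idealPiece 𝕜 n I 0 a)) (fun _ => (1 : ℤ))
    (fun s a => idealMulX 𝕜 n I 0 s a) i j

end KoszulModel

/-!
The `x`-variables act on `𝓡(I)` without changing the `w`-degree, so the Koszul complex on
`x_1, …, x_N` with coefficients in `𝓡(I)`, which computes `Tor^S(S/M, 𝓡(I))`, splits into
strands, and its strand in `w`-degree `d` is the Koszul complex of `I^d` over `R` computing
`Tor^R(𝕜, I^d)`, shifted by `r d`. Both live inside `R`, and the bidegree-`(j, d)` piece of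
`𝓡(I)` is literally the degree-`j + r d` piece of `I^d`, also for `j < 0`: there
`I^d ⊆ (x_1, …, x_N)^(r d)` has no nonzero elements of degree below `r d`.
-/

section Homology

variable {𝕜 : Type} [Field 𝕜] {M N P M' N' P' : Type}
  [AddCommGroup M] [Module 𝕜 M] [AddCommGroup N] [Module 𝕜 N] [AddCommGroup P] [Module 𝕜 P]
  [AddCommGroup M'] [Module 𝕜 M'] [AddCommGroup N'] [Module 𝕜 N'] [AddCommGroup P'] [Module 𝕜 P']

theorem finrank_homology_congr
    (f : M →ₗ[𝕜] N) (g : N →ₗ[𝕜] P) (f' : M' →ₗ[𝕜] N') (g' : N' →ₗ[𝕜] P')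
    (eM : M ≃ₗ[𝕜] M') (eN : N ≃ₗ[𝕜] N') (eP : P ≃ₗ[𝕜] P')
    (hf : ∀ x, eN (f x) = f' (eM x)) (hg : ∀ y, eP (g y) = g' (eN y)) :
    Module.finrank 𝕜 (↥(LinearMap.ker g) ⧸
        (LinearMap.range f).comap (LinearMap.ker g).subtype)
      = Module.finrank 𝕜 (↥(LinearMap.ker g') ⧸
        (LinearMap.range f').comap (LinearMap.ker g').subtype) := by
  have hf' : f' = eN.toLinearMap ∘ₗ f ∘ₗ eM.symm.toLinearMap := by
    ext x; simp [hf]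
  have hg' : g' = eP.toLinearMap ∘ₗ g ∘ₗ eN.symm.toLinearMap := by
    ext y; simp [hg]
  have hker : (LinearMap.ker g).map eN.toLinearMap = LinearMap.ker g' := by
    rw [hg', LinearEquiv.ker_comp, LinearMap.ker_comp, Submodule.comap_equiv_eq_map_symm,
      LinearEquiv.symm_symm]
  have hrange : LinearMap.range f' = (LinearMap.range f).map eN.toLinearMap := by
    rw [hf', LinearMap.range_comp, LinearMap.range_comp_of_range_eq_top _ eM.symm.range]
  let eK := (eN.submoduleMap (LinearMap.ker g)).trans (LinearEquiv.ofEq _ _ hker)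
  refine (Submodule.Quotient.equiv _ _ eK ?_).finrank_eq
  ext y
  rw [Submodule.map_equiv_eq_comap_symm, Submodule.mem_comap, Submodule.mem_comap,
    Submodule.mem_comap, hrange, Submodule.mem_map_equiv]
  rfl

end Homology

namespace KoszulModel

variable {𝕜 : Type} [Field 𝕜]

theorem coe_vcast {ι W : Type} [AddCommGroup W] [Module 𝕜 W] (P : ι → Submodule 𝕜 W)
    {a b : ι} (h : a = b) (x : P a) : (vcast 𝕜 (fun a => P a) h x : W) = x := by
  subst h
  rfl

variable {σ : Type} [Fintype σ] [LinearOrder σ] {ι ι' : Type} [AddCommGroup ι] [AddCommGroup ι']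

theorem betti_congr (V : ι → Type) [∀ a, AddCommGroup (V a)] [∀ a, Module 𝕜 (V a)]
    (δ : σ → ι) (Op : (s : σ) → (a : ι) → V a →ₗ[𝕜] V (a + δ s))
    (V' : ι' → Type) [∀ a, AddCommGroup (V' a)] [∀ a, Module 𝕜 (V' a)]
    (δ' : σ → ι') (Op' : (s : σ) → (a : ι') → V' a →ₗ[𝕜] V' (a + δ' s))
    (j : ι) (j' : ι')
    (e : (t : Finset σ) → V (j - ∑ s ∈ t, δ s) ≃ₗ[𝕜] V' (j' - ∑ s ∈ t, δ' s))
    (hcomm : ∀ (t : Finset σ) (s : σ) (_ : s ∉ t) (x : V (j - ∑ u ∈ insert s t, δ u))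
      (h1 : (j - ∑ u ∈ insert s t, δ u) + δ s = j - ∑ u ∈ t, δ u)
      (h2 : (j' - ∑ u ∈ insert s t, δ' u) + δ' s = j' - ∑ u ∈ t, δ' u),
      e t (vcast 𝕜 V h1 (Op s _ x)) = vcast 𝕜 V' h2 (Op' s _ (e (insert s t) x)))
    (i : ℕ) : betti 𝕜 σ V δ Op i j = betti 𝕜 σ V' δ' Op' i j' := by
  let E : ∀ m : ℕ, KSpace σ V δ m j ≃ₗ[𝕜] KSpace σ V' δ' m j' := fun m =>
    LinearEquiv.piCongrRight fun t => e t.1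
  have hkd : ∀ (m : ℕ) (x : KSpace σ V δ (m + 1) j),
      E m (kd 𝕜 σ V δ Op m j x) = kd 𝕜 σ V' δ' Op' m j' (E (m + 1) x) := by
    intro m x
    funext t
    change e t.1 (kd 𝕜 σ V δ Op m j x t) = _
    simp only [kd, LinearMap.coe_mk, AddHom.coe_mk, map_sum]
    refine Finset.sum_congr rfl fun s _ => ?_
    by_cases hs : s ∈ t.1
    · simp [hs]
    · simp only [hs, dite_false, map_smul]
      rw [hcomm t.1 s hs]
      rfl
  have hkdOut : ∀ x : KSpace σ V δ i j,
      E (i - 1) (kdOut 𝕜 σ V δ Op i j x) = kdOut 𝕜 σ V' δ' Op' i j' (E i x) := by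
    cases i with
    | zero => intro x; simp [kdOut]
    | succ m => exact hkd m
  exact finrank_homology_congr _ _ _ _ (E (i + 1)) (E i) (E (i - 1)) (hkd i) hkdOut

theorem betti_submodule_eq_of_reindex {W : Type} [AddCommGroup W] [Module 𝕜 W]
    (L : σ → W →ₗ[𝕜] W) (P : ι → Submodule 𝕜 W) (δ : σ → ι)
    (Op : (s : σ) → (a : ι) → P a →ₗ[𝕜] P (a + δ s)) (hOp : ∀ s a x, (Op s a x : W) = L s x)
    (P' : ι' → Submodule 𝕜 W) (δ' : σ → ι')
    (Op' : (s : σ) → (a : ι') → P' a →ₗ[𝕜] P' (a + δ' s))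
    (hOp' : ∀ s a x, (Op' s a x : W) = L s x)
    (φ : ι →+ ι') (c : ι') (hδ : ∀ s, δ' s = φ (δ s)) (hP : ∀ a, P a = P' (φ a + c))
    (i : ℕ) (j : ι) :
    betti 𝕜 σ (fun a => P a) δ Op i j = betti 𝕜 σ (fun a => P' a) δ' Op' i (φ j + c) := by
  have hpiece : ∀ t : Finset σ, P (j - ∑ s ∈ t, δ s) = P' (φ j + c - ∑ s ∈ t, δ' s) := by
    intro t
    rw [hP, map_sub, map_sum]
    simp only [hδ]
    abel_nf
  refine betti_congr _ _ _ _ _ _ _ _ (fun t => LinearEquiv.ofEq _ _ (hpiece t)) ?_ i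
  intro t s _ x h1 h2
  apply Subtype.ext
  simp only [LinearEquiv.coe_ofEq_apply, coe_vcast, hOp, hOp']

end KoszulModel

namespace MvPolynomial

variable {σ R : Type*} [CommSemiring R]

theorem IsHomogeneous.degree_eq {p : MvPolynomial σ R} {n : ℕ} (hp : p.IsHomogeneous n)
    {u : σ →₀ ℕ} (hu : coeff u p ≠ 0) : u.degree = n := by
  rw [Finsupp.degree_eq_weight_one]
  exact hp hu

theorem IsHomogeneous.mem_pow_idealOfVars {p : MvPolynomial σ R} {n : ℕ}
    (hp : p.IsHomogeneous n) : p ∈ idealOfVars σ R ^ n :=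
  (mem_pow_idealOfVars_iff n p).2 fun _ hu => (hp.degree_eq (mem_support_iff.1 hu)).ge

theorem IsHomogeneous.eq_zero_of_mem_pow_idealOfVars {p : MvPolynomial σ R} {m n : ℕ}
    (hp : p.IsHomogeneous m) (hpn : p ∈ idealOfVars σ R ^ n) (hmn : m < n) : p = 0 := by
  ext u
  by_contra hu
  have := (mem_pow_idealOfVars_iff n p).1 hpn u (mem_support_iff.2 hu)
  rw [hp.degree_eq hu] at this
  omega

theorem span_pow_le_pow_idealOfVars {ι : Type*} {f : ι → MvPolynomial σ R} {r : ℕ}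
    (hf : ∀ t, (f t).IsHomogeneous r) (d : ℕ) :
    Ideal.span (Set.range f) ^ d ≤ idealOfVars σ R ^ (r * d) := by
  rw [pow_mul]
  refine Ideal.pow_right_mono ?_ d
  rw [Ideal.span_le]
  rintro - ⟨t, rfl⟩
  exact (hf t).mem_pow_idealOfVars

end MvPolynomial

open KoszulModel

theorem idealPiece_pow_eq_reesPiece {𝕜 ι : Type} [Field 𝕜] {N r : ℕ}
    {f : ι → MvPolynomial (Fin N) 𝕜} (hfh : ∀ t, (f t).IsHomogeneous r)
    (d : ℕ) (a : ℤ) :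
    idealPiece 𝕜 N (Ideal.span (Set.range f) ^ d) 0 a =
      reesPiece 𝕜 N (Ideal.span (Set.range f)) r (a - r * d, d) := by
  have hrd₀ : (0 : ℤ) ≤ r * d := by positivity
  unfold idealPiece reesPiece
  simp only [Int.toNat_natCast, add_zero, Nat.cast_nonneg, and_true, sub_nonneg]
  split_ifs with ha hrd hrd
  · congr 2
    omega
  · refine eq_bot_iff.2 fun p hp => (Submodule.mem_bot 𝕜).2 ?_
    obtain ⟨hpI, hph⟩ := Submodule.mem_inf.1 hp
    exact IsHomogeneous.eq_zero_of_mem_pow_idealOfVars hph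
      (span_pow_le_pow_idealOfVars hfh d hpI) (by omega)
  · omega
  · rfl

/-- For `I = (f_0,…,f_k) ⊆ R = 𝕜[x_1,…,x_N]` equigenerated in degree `r`,
`β_{i, j+rd}(I^d) = dim_𝕜 Tor_i^S(S/M, 𝓡(I))_{(j,d)}` for all `i, j, d`, where
`S = 𝕜[x, w]` presents the bigraded Rees algebra `𝓡(I)` and `M = (x_1,…,x_N)`. -/
theorem betti_of_power_eq_rees_tor_dim (𝕜 : Type) [Field 𝕜] (N k r : ℕ)
    (I : Ideal (MvPolynomial (Fin N) 𝕜)) (f : Fin (k + 1) → MvPolynomial (Fin N) 𝕜)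
    (hfh : ∀ t, (f t).IsHomogeneous r) (hI : I = Ideal.span (Set.range f)) :
    ∀ (i j d : ℕ),
      idealBetti 𝕜 N (I ^ d) i (j + r * d) = reesTorSMDim 𝕜 N I r i ((j : ℤ), (d : ℤ)) := by
  intro i j d
  subst hI
  let shift : ℤ × ℤ := (-(r * d : ℤ), d)
  have hpiece : ∀ a : ℤ, idealPiece 𝕜 N (Ideal.span (Set.range f) ^ d) 0 a =
      reesPiece 𝕜 N (Ideal.span (Set.range f)) r (AddMonoidHom.inl ℤ ℤ a + shift) := by
    intro a
    rw [idealPiece_pow_eq_reesPiece hfh, AddMonoidHom.inl_apply, Prod.mk_add_mk,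
      zero_add, ← sub_eq_add_neg]
  have hj : AddMonoidHom.inl ℤ ℤ ((j + r * d : ℕ) : ℤ) + shift = ((j : ℤ), (d : ℤ)) := by
    simp [shift]
  rw [idealBetti, reesTorSMDim, ← betti, ← hj]
  exact betti_submodule_eq_of_reindex (fun s => LinearMap.mulLeft 𝕜 (X s)) _ _ _
    (fun _ _ _ => rfl) _ _ _ (fun _ _ _ => rfl) _ _ (fun _ => rfl) hpiece i _
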